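/- Let P be the subgroup of the symmetric group on {1,...,10} generated by the five permutations (5,6)(7,8)(9,10), (1,2)(3,4), (1,2)(3,4)(7,8)(9,10), (1,4,8,9,2,3,7,10)(5,6), (1,9,2,10)(3,5,7)(4,6,8). Then P has order 3840, the natural action of P on {1,...,10} is transitive, but this action is not 2-transitive. -/

import Mathlib

set_option maxRecDepth 20000


/- Permutations of {1,…,10} are encoded as `Equiv.Perm (Fin 10)`, where `k : Fin 10`
stands for the point k+1; `c[…]` is cycle notation. -/

/-- The subgroup P generated by the five permutations
(5,6)(7,8)(9,10), (1,2)(3,4), (1,2)(3,4)(7,8)(9,10), (1,4,8,9,2,3,7,10)(5,6),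
(1,9,2,10)(3,5,7)(4,6,8). -/
def P : Subgroup (Equiv.Perm (Fin 10)) :=
  Subgroup.closure
    { c[(4 : Fin 10), 5] * c[(6 : Fin 10), 7] * c[(8 : Fin 10), 9],
      c[(0 : Fin 10), 1] * c[(2 : Fin 10), 3],
      c[(0 : Fin 10), 1] * c[(2 : Fin 10), 3] * c[(6 : Fin 10), 7] * c[(8 : Fin 10), 9],
      c[(0 : Fin 10), 3, 7, 8, 1, 2, 6, 9] * c[(4 : Fin 10), 5],
      c[(0 : Fin 10), 8, 1, 9] * c[(2 : Fin 10), 4, 6] * c[(3 : Fin 10), 5, 7] }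

namespace PAux

def tau : Equiv.Perm (Fin 10) :=
  c[(0:Fin 10),1] * c[(2:Fin 10),3] * c[(4:Fin 10),5] * c[(6:Fin 10),7] * c[(8:Fin 10),9]

def a1 : Equiv.Perm (Fin 10) := c[(4 : Fin 10), 5] * c[(6 : Fin 10), 7] * c[(8 : Fin 10), 9]
def a2 : Equiv.Perm (Fin 10) := c[(0 : Fin 10), 1] * c[(2 : Fin 10), 3]
def a3 : Equiv.Perm (Fin 10) :=
  c[(0 : Fin 10), 1] * c[(2 : Fin 10), 3] * c[(6 : Fin 10), 7] * c[(8 : Fin 10), 9]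
def a4 : Equiv.Perm (Fin 10) := c[(0 : Fin 10), 3, 7, 8, 1, 2, 6, 9] * c[(4 : Fin 10), 5]
def a5 : Equiv.Perm (Fin 10) :=
  c[(0 : Fin 10), 8, 1, 9] * c[(2 : Fin 10), 4, 6] * c[(3 : Fin 10), 5, 7]

lemma ha1 : a1 ∈ P := Subgroup.subset_closure (Set.mem_insert _ _)
lemma ha2 : a2 ∈ P :=
  Subgroup.subset_closure (Set.mem_insert_of_mem _ (Set.mem_insert _ _))
lemma ha3 : a3 ∈ P :=
  Subgroup.subset_closure (Set.mem_insert_of_mem _ (Set.mem_insert_of_mem _ (Set.mem_insert _ _)))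
lemma ha4 : a4 ∈ P :=
  Subgroup.subset_closure (Set.mem_insert_of_mem _ (Set.mem_insert_of_mem _
    (Set.mem_insert_of_mem _ (Set.mem_insert _ _))))
lemma ha5 : a5 ∈ P :=
  Subgroup.subset_closure (Set.mem_insert_of_mem _ (Set.mem_insert_of_mem _
    (Set.mem_insert_of_mem _ (Set.mem_insert_of_mem _ rfl))))

lemma hcomm : ∀ g ∈ P, g * tau = tau * g := by
  intro g hg
  induction hg using Subgroup.closure_induction with
  | mem x hx =>
    simp only [Set.mem_insert_iff, Set.mem_singleton_iff] at hx
    obtain rfl | rfl | rfl | rfl | rfl := hx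
    all_goals decide
  | one => rw [one_mul, mul_one]
  | mul x y hx hy ihx ihy => rw [mul_assoc, ihy, ← mul_assoc, ihx, mul_assoc]
  | inv x hx ih =>
    have h2 := congrArg (fun z => x⁻¹ * z * x⁻¹) ih
    simp only [← mul_assoc] at h2
    simp only [inv_mul_cancel, one_mul] at h2
    simp only [mul_assoc, mul_inv_cancel, mul_one] at h2
    exact h2.symm

lemma gtau {g : Equiv.Perm (Fin 10)} (hg : g ∈ P) (x : Fin 10) : g (tau x) = tau (g x) := by
  have h := hcomm g hg
  calc g (tau x) = (g * tau) x := rfl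
    _ = (tau * g) x := by rw [h]
    _ = tau (g x) := rfl

def blk (x : Fin 10) : Fin 5 := ⟨x.val / 2, by omega⟩
def par (x : Fin 10) : Fin 2 := ⟨x.val % 2, by omega⟩

lemma sb : ∀ x y : Fin 10, blk x = blk y ↔ (y = x ∨ y = tau x) := by decide

lemma blkeq {g : Equiv.Perm (Fin 10)} (hg : g ∈ P) {x y : Fin 10}
    (h : blk x = blk y) : blk (g x) = blk (g y) := by
  rcases (sb x y).1 h with rfl | rfl
  · rfl
  · exact (sb (g x) (g (tau x))).2 (Or.inr (gtau hg x))

lemma blkne {g : Equiv.Perm (Fin 10)} (hg : g ∈ P) {x y : Fin 10}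
    (h : blk x ≠ blk y) : blk (g x) ≠ blk (g y) := by
  intro hc
  apply h
  have := blkeq (inv_mem hg) hc
  simpa using this

lemma invmap (g : Equiv.Perm (Fin 10)) {x y : Fin 10} (h : g x = y) : g⁻¹ y = x := by
  rw [← h]; exact g.symm_apply_apply x

lemma perm_apply_inv_self (g : Equiv.Perm (Fin 10)) (x : Fin 10) : g (g⁻¹ x) = x :=
  g.apply_symm_apply x

lemma E1 (a : Fin 10) : ∃ g ∈ P, g 0 = a := by
  fin_cases a
  · exact ⟨1, one_mem P, by decide⟩
  · exact ⟨a2, ha2, by decide⟩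
  · exact ⟨a2 * a4, mul_mem ha2 ha4, by decide⟩
  · exact ⟨a4, ha4, by decide⟩
  · exact ⟨a1 * a5 * a4, mul_mem (mul_mem ha1 ha5) ha4, by decide⟩
  · exact ⟨a5 * a4, mul_mem ha5 ha4, by decide⟩
  · exact ⟨a1 * a4 * a4, mul_mem (mul_mem ha1 ha4) ha4, by decide⟩
  · exact ⟨a4 * a4, mul_mem ha4 ha4, by decide⟩
  · exact ⟨a5, ha5, by decide⟩
  · exact ⟨a1 * a5, mul_mem ha1 ha5, by decide⟩

lemma E2 (b : Fin 10) (h : blk b ≠ blk 0) : ∃ g ∈ P, g 0 = 0 ∧ g 2 = b := by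
  fin_cases b
  · exact absurd (by decide) h
  · exact absurd (by decide) h
  · exact ⟨1, one_mem P, by decide, by decide⟩
  · exact ⟨a5 * a5 * a4 * a5, mul_mem (mul_mem (mul_mem ha5 ha5) ha4) ha5, by decide, by decide⟩
  · exact ⟨a4 * a1 * a5, mul_mem (mul_mem ha4 ha1) ha5, by decide, by decide⟩
  · exact ⟨a2 * a4 * a5, mul_mem (mul_mem ha2 ha4) ha5, by decide, by decide⟩
  · exact ⟨a2 * a5 * a5, mul_mem (mul_mem ha2 ha5) ha5, by decide, by decide⟩
  · exact ⟨a3 * a5 * a5, mul_mem (mul_mem ha3 ha5) ha5, by decide, by decide⟩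
  · exact ⟨a4 * a5 * a4 * a5, mul_mem (mul_mem (mul_mem ha4 ha5) ha4) ha5, by decide, by decide⟩
  · exact ⟨a1 * a4 * a5 * a4 * a5, mul_mem (mul_mem (mul_mem (mul_mem ha1 ha4) ha5) ha4) ha5,
      by decide, by decide⟩

lemma E3 (c : Fin 10) (h0 : blk c ≠ blk 0) (h2 : blk c ≠ blk 2) :
    ∃ g ∈ P, g 0 = 0 ∧ g 2 = 2 ∧ g 4 = c := by
  fin_cases c
  · exact absurd (by decide) h0
  · exact absurd (by decide) h0
  · exact absurd (by decide) h2
  · exact absurd (by decide) h2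
  · exact ⟨1, one_mem P, by decide, by decide, by decide⟩
  · exact ⟨a1, ha1, by decide, by decide, by decide⟩
  · exact ⟨a1 * a4 * a5 * a5 * a4 * a4 * a4,
      mul_mem (mul_mem (mul_mem (mul_mem (mul_mem (mul_mem ha1 ha4) ha5) ha5) ha4) ha4) ha4,
      by decide, by decide, by decide⟩
  · exact ⟨a4 * a5 * a5 * a4 * a4 * a4,
      mul_mem (mul_mem (mul_mem (mul_mem (mul_mem ha4 ha5) ha5) ha4) ha4) ha4,
      by decide, by decide, by decide⟩
  · exact ⟨a1 * a5 * a5 * a1 * a4 * a5,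
      mul_mem (mul_mem (mul_mem (mul_mem (mul_mem ha1 ha5) ha5) ha1) ha4) ha5,
      by decide, by decide, by decide⟩
  · exact ⟨a5 * a5 * a1 * a4 * a5,
      mul_mem (mul_mem (mul_mem (mul_mem ha5 ha5) ha1) ha4) ha5,
      by decide, by decide, by decide⟩

lemma E4 (d : Fin 10) (h0 : blk d ≠ blk 0) (h2 : blk d ≠ blk 2) (h4 : blk d ≠ blk 4) :
    ∃ g ∈ P, g 0 = 0 ∧ g 2 = 2 ∧ g 4 = 4 ∧ g 6 = d := by
  fin_cases d
  · exact absurd (by decide) h0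
  · exact absurd (by decide) h0
  · exact absurd (by decide) h2
  · exact absurd (by decide) h2
  · exact absurd (by decide) h4
  · exact absurd (by decide) h4
  · exact ⟨1, one_mem P, by decide, by decide, by decide, by decide⟩
  · exact ⟨a2 * a3, mul_mem ha2 ha3, by decide, by decide, by decide, by decide⟩
  · exact ⟨a4 * a4 * a5 * a5 * a4 * a5 * a5,
      mul_mem (mul_mem (mul_mem (mul_mem (mul_mem (mul_mem ha4 ha4) ha5) ha5) ha4) ha5) ha5,
      by decide, by decide, by decide, by decide⟩
  · exact ⟨a5 * a4 * a5 * a5 * a4 * a4 * a5,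
      mul_mem (mul_mem (mul_mem (mul_mem (mul_mem (mul_mem ha5 ha4) ha5) ha5) ha4) ha4) ha5,
      by decide, by decide, by decide, by decide⟩

lemma E5 (e : Fin 10) (h0 : blk e ≠ blk 0) (h2 : blk e ≠ blk 2) (h4 : blk e ≠ blk 4)
    (h6 : blk e ≠ blk 6) :
    ∃ g ∈ P, g 0 = 0 ∧ g 2 = 2 ∧ g 4 = 4 ∧ g 6 = 6 ∧ g 8 = e := by
  fin_cases e
  · exact absurd (by decide) h0
  · exact absurd (by decide) h0
  · exact absurd (by decide) h2
  · exact absurd (by decide) h2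
  · exact absurd (by decide) h4
  · exact absurd (by decide) h4
  · exact absurd (by decide) h6
  · exact absurd (by decide) h6
  · exact ⟨1, one_mem P, by decide, by decide, by decide, by decide, by decide⟩
  · exact ⟨a5 * a4 * a5 * a4 * a5 * a4,
      mul_mem (mul_mem (mul_mem (mul_mem (mul_mem ha5 ha4) ha5) ha4) ha5) ha4,
      by decide, by decide, by decide, by decide, by decide⟩

lemma Esurj (a b c d e : Fin 10)
    (hab : blk a ≠ blk b) (hac : blk a ≠ blk c) (had : blk a ≠ blk d) (hae : blk a ≠ blk e)
    (hbc : blk b ≠ blk c) (hbd : blk b ≠ blk d) (hbe : blk b ≠ blk e)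
    (hcd : blk c ≠ blk d) (hce : blk c ≠ blk e) (hde : blk d ≠ blk e) :
    ∃ g ∈ P, g 0 = a ∧ g 2 = b ∧ g 4 = c ∧ g 6 = d ∧ g 8 = e := by
  obtain ⟨t, ht, ht0⟩ := E1 a
  have hti := inv_mem ht
  have e0 : t⁻¹ a = 0 := invmap t ht0
  obtain ⟨u, hu, hu0, hu2⟩ := E2 (t⁻¹ b) (by
    have h := blkne hti hab; rw [e0] at h; exact h.symm)
  have hui := inv_mem hu
  have f0 : u⁻¹ 0 = 0 := invmap u hu0
  have f2 : u⁻¹ (t⁻¹ b) = 2 := invmap u hu2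
  obtain ⟨v, hv, hv0, hv2, hv4⟩ := E3 (u⁻¹ (t⁻¹ c))
    (by have h := blkne hti hac; rw [e0] at h
        have h := blkne hui h; rw [f0] at h; exact h.symm)
    (by have h := blkne hti hbc
        have h := blkne hui h; rw [f2] at h; exact h.symm)
  have hvi := inv_mem hv
  have k0 : v⁻¹ 0 = 0 := invmap v hv0
  have k2 : v⁻¹ 2 = 2 := invmap v hv2
  have k4 : v⁻¹ (u⁻¹ (t⁻¹ c)) = 4 := invmap v hv4
  obtain ⟨w, hw, hw0, hw2, hw4, hw6⟩ := E4 (v⁻¹ (u⁻¹ (t⁻¹ d)))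
    (by have h := blkne hti had; rw [e0] at h
        have h := blkne hui h; rw [f0] at h
        have h := blkne hvi h; rw [k0] at h; exact h.symm)
    (by have h := blkne hti hbd
        have h := blkne hui h; rw [f2] at h
        have h := blkne hvi h; rw [k2] at h; exact h.symm)
    (by have h := blkne hti hcd
        have h := blkne hui h
        have h := blkne hvi h; rw [k4] at h; exact h.symm)
  have hwi := inv_mem hw
  have m0 : w⁻¹ 0 = 0 := invmap w hw0
  have m2 : w⁻¹ 2 = 2 := invmap w hw2
  have m4 : w⁻¹ 4 = 4 := invmap w hw4
  have m6 : w⁻¹ (v⁻¹ (u⁻¹ (t⁻¹ d))) = 6 := invmap w hw6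
  obtain ⟨x, hx, hx0, hx2, hx4, hx6, hx8⟩ := E5 (w⁻¹ (v⁻¹ (u⁻¹ (t⁻¹ e))))
    (by have h := blkne hti hae; rw [e0] at h
        have h := blkne hui h; rw [f0] at h
        have h := blkne hvi h; rw [k0] at h
        have h := blkne hwi h; rw [m0] at h; exact h.symm)
    (by have h := blkne hti hbe
        have h := blkne hui h; rw [f2] at h
        have h := blkne hvi h; rw [k2] at h
        have h := blkne hwi h; rw [m2] at h; exact h.symm)
    (by have h := blkne hti hce
        have h := blkne hui h
        have h := blkne hvi h; rw [k4] at h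
        have h := blkne hwi h; rw [m4] at h; exact h.symm)
    (by have h := blkne hti hde
        have h := blkne hui h
        have h := blkne hvi h
        have h := blkne hwi h; rw [m6] at h; exact h.symm)
  refine ⟨t * u * v * w * x,
    mul_mem (mul_mem (mul_mem (mul_mem ht hu) hv) hw) hx, ?_, ?_, ?_, ?_, ?_⟩
  · simp only [Equiv.Perm.mul_apply]
    rw [hx0, hw0, hv0, hu0, ht0]
  · simp only [Equiv.Perm.mul_apply]
    rw [hx2, hw2, hv2, hu2, perm_apply_inv_self]
  · simp only [Equiv.Perm.mul_apply]
    rw [hx4, hw4, hv4, perm_apply_inv_self, perm_apply_inv_self]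
  · simp only [Equiv.Perm.mul_apply]
    rw [hx6, hw6, perm_apply_inv_self, perm_apply_inv_self,
      perm_apply_inv_self]
  · simp only [Equiv.Perm.mul_apply]
    rw [hx8, perm_apply_inv_self, perm_apply_inv_self,
      perm_apply_inv_self, perm_apply_inv_self]

lemma ginj {g h : Equiv.Perm (Fin 10)} (hg : g ∈ P) (hh : h ∈ P)
    (h0 : g 0 = h 0) (h2 : g 2 = h 2) (h4 : g 4 = h 4) (h6 : g 6 = h 6) (h8 : g 8 = h 8) :
    g = h := by
  have o : ∀ x : Fin 10, g x = h x → g (tau x) = h (tau x) := fun x hx => by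
    rw [gtau hg, gtau hh, hx]
  have t1 : (1 : Fin 10) = tau 0 := by decide
  have t3 : (3 : Fin 10) = tau 2 := by decide
  have t5 : (5 : Fin 10) = tau 4 := by decide
  have t7 : (7 : Fin 10) = tau 6 := by decide
  have t9 : (9 : Fin 10) = tau 8 := by decide
  have h1 : g 1 = h 1 := by rw [t1]; exact o 0 h0
  have h3 : g 3 = h 3 := by rw [t3]; exact o 2 h2
  have h5 : g 5 = h 5 := by rw [t5]; exact o 4 h4
  have h7 : g 7 = h 7 := by rw [t7]; exact o 6 h6
  have h9 : g 9 = h 9 := by rw [t9]; exact o 8 h8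
  ext x
  fin_cases x
  · exact congrArg Fin.val h0
  · exact congrArg Fin.val h1
  · exact congrArg Fin.val h2
  · exact congrArg Fin.val h3
  · exact congrArg Fin.val h4
  · exact congrArg Fin.val h5
  · exact congrArg Fin.val h6
  · exact congrArg Fin.val h7
  · exact congrArg Fin.val h8
  · exact congrArg Fin.val h9

def pt (k : Fin 5) (p : Fin 2) : Fin 10 := ⟨2 * k.val + p.val, by omega⟩

lemma blkpt : ∀ (k : Fin 5) (p : Fin 2), blk (pt k p) = k := by decide
lemma parpt : ∀ (k : Fin 5) (p : Fin 2), par (pt k p) = p := by decide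
lemma decode : ∀ x y : Fin 10, blk x = blk y → par x = par y → x = y := by decide

abbrev W := {w : Fin 5 × Fin 5 × Fin 5 × Fin 5 × Fin 5 //
  w.1 ≠ w.2.1 ∧ w.1 ≠ w.2.2.1 ∧ w.1 ≠ w.2.2.2.1 ∧ w.1 ≠ w.2.2.2.2 ∧
  w.2.1 ≠ w.2.2.1 ∧ w.2.1 ≠ w.2.2.2.1 ∧ w.2.1 ≠ w.2.2.2.2 ∧
  w.2.2.1 ≠ w.2.2.2.1 ∧ w.2.2.1 ≠ w.2.2.2.2 ∧ w.2.2.2.1 ≠ w.2.2.2.2}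

abbrev V := Fin 2 × Fin 2 × Fin 2 × Fin 2 × Fin 2

def F (g : ↥P) : V × W :=
  ⟨(par (g.1 0), par (g.1 2), par (g.1 4), par (g.1 6), par (g.1 8)),
   ⟨(blk (g.1 0), blk (g.1 2), blk (g.1 4), blk (g.1 6), blk (g.1 8)),
    blkne g.2 (by decide), blkne g.2 (by decide), blkne g.2 (by decide), blkne g.2 (by decide),
    blkne g.2 (by decide), blkne g.2 (by decide), blkne g.2 (by decide),
    blkne g.2 (by decide), blkne g.2 (by decide), blkne g.2 (by decide)⟩⟩

lemma Fbij : Function.Bijective F := by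
  constructor
  · rintro ⟨g, hg⟩ ⟨h, hh⟩ heq
    have p0 : par (g 0) = par (h 0) := congrArg (fun z => z.1.1) heq
    have p2 : par (g 2) = par (h 2) := congrArg (fun z => z.1.2.1) heq
    have p4 : par (g 4) = par (h 4) := congrArg (fun z => z.1.2.2.1) heq
    have p6 : par (g 6) = par (h 6) := congrArg (fun z => z.1.2.2.2.1) heq
    have p8 : par (g 8) = par (h 8) := congrArg (fun z => z.1.2.2.2.2) heq
    have b0 : blk (g 0) = blk (h 0) := congrArg (fun z => z.2.val.1) heq
    have b2 : blk (g 2) = blk (h 2) := congrArg (fun z => z.2.val.2.1) heq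
    have b4 : blk (g 4) = blk (h 4) := congrArg (fun z => z.2.val.2.2.1) heq
    have b6 : blk (g 6) = blk (h 6) := congrArg (fun z => z.2.val.2.2.2.1) heq
    have b8 : blk (g 8) = blk (h 8) := congrArg (fun z => z.2.val.2.2.2.2) heq
    exact Subtype.ext (ginj hg hh (decode _ _ b0 p0) (decode _ _ b2 p2) (decode _ _ b4 p4)
      (decode _ _ b6 p6) (decode _ _ b8 p8))
  · rintro ⟨⟨p0, p2, p4, p6, p8⟩, ⟨⟨w0, w2, w4, w6, w8⟩, h1, h2, h3, h4, h5, h6, h7, h8, h9, h10⟩⟩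
    obtain ⟨g, hg, e0, e2, e4, e6, e8⟩ := Esurj (pt w0 p0) (pt w2 p2) (pt w4 p4) (pt w6 p6)
      (pt w8 p8)
      (by rw [blkpt, blkpt]; exact h1) (by rw [blkpt, blkpt]; exact h2)
      (by rw [blkpt, blkpt]; exact h3) (by rw [blkpt, blkpt]; exact h4)
      (by rw [blkpt, blkpt]; exact h5) (by rw [blkpt, blkpt]; exact h6)
      (by rw [blkpt, blkpt]; exact h7) (by rw [blkpt, blkpt]; exact h8)
      (by rw [blkpt, blkpt]; exact h9) (by rw [blkpt, blkpt]; exact h10)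
    refine ⟨⟨g, hg⟩, ?_⟩
    simp only [F, e0, e2, e4, e6, e8, blkpt, parpt]

lemma cardW : Nat.card W = 120 := by
  rw [Nat.card_eq_fintype_card]; decide

lemma cardV : Nat.card V = 32 := by
  rw [Nat.card_eq_fintype_card]; decide

end PAux

open PAux in
/-- P has order 3840, acts transitively on the ten points, but not 2-transitively. -/
theorem P_card_transitive_not_two_transitive :
    Nat.card ↥P = 3840 ∧
      (∀ m n : Fin 10, ∃ g ∈ P, g m = n) ∧
      ¬ (∀ m₁ m₂ n₁ n₂ : Fin 10, m₁ ≠ m₂ → n₁ ≠ n₂ →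
          ∃ g ∈ P, g m₁ = n₁ ∧ g m₂ = n₂) := by
  refine ⟨?_, ?_, ?_⟩
  · rw [Nat.card_eq_of_bijective F Fbij, Nat.card_prod, cardV, cardW]
  · intro m n
    obtain ⟨tm, htm, htm0⟩ := E1 m
    obtain ⟨tn, htn, htn0⟩ := E1 n
    refine ⟨tn * tm⁻¹, mul_mem htn (inv_mem htm), ?_⟩
    have : tm⁻¹ m = 0 := invmap tm htm0
    calc (tn * tm⁻¹) m = tn (tm⁻¹ m) := rfl
      _ = tn 0 := by rw [this]
      _ = n := htn0
  · intro H
    obtain ⟨g, hg, hm, hn⟩ := H 0 1 0 2 (by decide) (by decide)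
    have t1 : (1 : Fin 10) = tau 0 := by decide
    have h1 : g 1 = 1 := by
      rw [t1, gtau hg 0, hm]
    rw [hn] at h1
    exact absurd h1 (by decide)
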